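/- Corollary (equivalence classes are checked atomically under signaling): let v ≥ 0 and k > 0, fix a signal y ∈ Y with Pr[y] > 0, and let (π*_y, B*_y) be a strategy maximizing the conditional utility U_y(v,k,·,·) over all strategies (π, B). If two passwords pw_i, pw_j ∈ P satisfy p_y(pw_i) = p_y(pw_j) > 0, then ind_{π*_y}(pw_i) ≤ B*_y if and only if ind_{π*_y}(pw_j) ≤ B*_y, where ind_{π*_y}(pw) denotes the position of pw in the order π*_y. -/

import Mathlib

/- Context: P finite set of passwords, Y a finite set of signals,
q : P × Y → ℝ a joint probability distribution with password marginal p.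
Pr[y] = Σ_{pw} q(pw,y); for Pr[y] > 0 the posterior is p_y(pw) = q(pw,y)/Pr[y].
λ and U are as in the no-signal setting, with p replaced by the posterior p_y. -/

variable {P : Type*} [Fintype P]

noncomputable def lam (p : P → ℝ) (π : Fin (Fintype.card P) ≃ P) (B : ℕ) : ℝ :=
  ∑ i ∈ Finset.univ.filter (fun i : Fin (Fintype.card P) => (i : ℕ) < B), p (π i)

noncomputable def U (p : P → ℝ) (v k : ℝ) (π : Fin (Fintype.card P) ≃ P) (B : ℕ) : ℝ :=
  v * lam p π B - k * ∑ i ∈ Finset.range B, (1 - lam p π i)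

noncomputable def post {Y : Type*} [Fintype Y] (q : P → Y → ℝ) (y : Y) : P → ℝ :=
  fun pw => q pw y / ∑ pw', q pw' y

/-!
Suppose `pwᵢ` is guessed within the optimal budget `B + 1` and `pwⱼ` is not, and let `c` be the
probability of the last guess. Optimality against three competitors gives: stopping one guess
earlier, `k (1 - λ B) ≤ v c`; guessing `pwⱼ` next, `v pᵢ ≤ k (1 - λ B - c)`; exchanging `pwᵢ` with
the last guess, `c ≤ pᵢ`. Together they force `c = 0` and `λ B = 1`, leaving no mass for `pwⱼ`.
-/

section Strategy

variable (p : P → ℝ) (π : Fin (Fintype.card P) ≃ P)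

lemma lam_succ {B : ℕ} (hB : B < Fintype.card P) :
    lam p π (B + 1) = lam p π B + p (π ⟨B, hB⟩) := by
  have hset : (Finset.univ.filter fun i : Fin (Fintype.card P) => (i : ℕ) < B + 1)
      = insert ⟨B, hB⟩ (Finset.univ.filter fun i : Fin (Fintype.card P) => (i : ℕ) < B) := by
    ext i
    simp only [Finset.mem_filter, Finset.mem_univ, true_and, Finset.mem_insert, Fin.ext_iff]
    omega
  rw [lam, hset, Finset.sum_insert (by simp), add_comm, lam]

lemma U_succ (v k : ℝ) {B : ℕ} (hB : B < Fintype.card P) :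
    U p v k π (B + 1) = U p v k π B + v * p (π ⟨B, hB⟩) - k * (1 - lam p π B) := by
  rw [U, U, lam_succ p π hB, Finset.sum_range_succ]
  ring

lemma U_congr_of_lam_eq (v k : ℝ) (π' : Fin (Fintype.card P) ≃ P) {B : ℕ}
    (h : ∀ i ≤ B, lam p π' i = lam p π i) : U p v k π' B = U p v k π B := by
  rw [U, U, h B le_rfl, Finset.sum_congr rfl fun i hi => by
    rw [h i (Finset.mem_range.mp hi).le]]

lemma lam_add_le_one (hp : ∀ pw, 0 ≤ p pw) (hsum : ∑ pw, p pw = 1) {B : ℕ}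
    {b : Fin (Fintype.card P)} (hb : B ≤ b) : lam p π B + p (π b) ≤ 1 := by
  have hbF : b ∉ Finset.univ.filter fun i : Fin (Fintype.card P) => (i : ℕ) < B := by
    simp [hb]
  calc lam p π B + p (π b)
      = ∑ i ∈ insert b (Finset.univ.filter fun i : Fin (Fintype.card P) => (i : ℕ) < B),
          p (π i) := by rw [Finset.sum_insert hbF, lam, add_comm]
    _ ≤ ∑ i, p (π i) :=
        Finset.sum_le_sum_of_subset_of_nonneg (Finset.subset_univ _) fun i _ _ => hp _
    _ = 1 := by rw [Equiv.sum_comp π p, hsum]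

variable (a b : Fin (Fintype.card P))

lemma lam_swap_of_lt_iff {B : ℕ} (hab : (a : ℕ) < B ↔ (b : ℕ) < B) :
    lam p ((Equiv.swap a b).trans π) B = lam p π B := by
  refine Finset.sum_equiv (Equiv.swap a b) (fun i => ?_) fun i _ => by simp
  simp only [Finset.mem_filter, Finset.mem_univ, true_and]
  rcases eq_or_ne i a with rfl | ha
  · rw [Equiv.swap_apply_left]; exact hab
  rcases eq_or_ne i b with rfl | hb
  · rw [Equiv.swap_apply_right]; exact hab.symm
  · rw [Equiv.swap_apply_of_ne_of_ne ha hb]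

lemma lam_swap_of_lt_of_le {B : ℕ} (ha : (a : ℕ) < B) (hb : B ≤ b) :
    lam p ((Equiv.swap a b).trans π) B = lam p π B - p (π a) + p (π b) := by
  have haF : a ∈ Finset.univ.filter fun i : Fin (Fintype.card P) => (i : ℕ) < B := by
    simp [ha]
  have hrest : ∀ i ∈ (Finset.univ.filter fun i : Fin (Fintype.card P) => (i : ℕ) < B).erase a,
      p (((Equiv.swap a b).trans π) i) = p (π i) := by
    intro i hi
    have hib : i ≠ b := by
      rintro rfl
      exact absurd (Finset.mem_filter.mp (Finset.mem_of_mem_erase hi)).2 (not_lt.mpr hb)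
    simp [Equiv.swap_apply_of_ne_of_ne (Finset.ne_of_mem_erase hi) hib]
  rw [lam, lam, ← Finset.add_sum_erase _ _ haF, ← Finset.add_sum_erase _ _ haF,
    Finset.sum_congr rfl hrest, Equiv.trans_apply, Equiv.swap_apply_left]
  ring

lemma U_swap_of_le_of_le (v k : ℝ) {B : ℕ} (ha : B ≤ a) (hb : B ≤ b) :
    U p v k ((Equiv.swap a b).trans π) B = U p v k π B :=
  U_congr_of_lam_eq p π v k _ fun _ hi => lam_swap_of_lt_iff p π a b (by omega)

/-- Exchanging the guesses at positions `a ≤ b` inside the budget changes the success probability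
after `i` guesses by `p (π b) - p (π a)` exactly for `a < i ≤ b`. -/
lemma U_swap_of_le (v k : ℝ) {B : ℕ} (hab : (a : ℕ) ≤ b) (hb : (b : ℕ) < B) :
    U p v k ((Equiv.swap a b).trans π) B
      = U p v k π B + k * ((b - a : ℕ) * (p (π b) - p (π a))) := by
  set d := p (π b) - p (π a)
  have hlam : ∀ i, lam p ((Equiv.swap a b).trans π) i
      = lam p π i + if i ∈ Finset.Ioc (a : ℕ) b then d else 0 := by
    intro i
    by_cases hi : i ∈ Finset.Ioc (a : ℕ) b
    · rw [Finset.mem_Ioc] at hi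
      rw [if_pos (Finset.mem_Ioc.mpr hi), lam_swap_of_lt_of_le p π a b hi.1 hi.2]
      ring
    · rw [Finset.mem_Ioc] at hi
      rw [if_neg (by rwa [Finset.mem_Ioc]), add_zero, lam_swap_of_lt_iff p π a b (by omega)]
  have hcount : ∑ i ∈ Finset.range B, (if i ∈ Finset.Ioc (a : ℕ) b then d else 0)
      = (b - a : ℕ) * d := by
    have hsub : Finset.Ioc (a : ℕ) b ⊆ Finset.range B := fun i hi => by
      rw [Finset.mem_Ioc] at hi
      exact Finset.mem_range.mpr (by omega)
    rw [Finset.sum_ite_mem, Finset.inter_eq_right.mpr hsub, Finset.sum_const, Nat.card_Ioc,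
      nsmul_eq_mul]
  simp only [U, hlam, if_neg (show B ∉ Finset.Ioc (a : ℕ) b by simp; omega), add_zero,
    sub_add_eq_sub_sub, Finset.sum_sub_distrib, hcount]
  ring

lemma U_swap_succ (v k : ℝ) {B : ℕ} (hB : B < Fintype.card P) (hb : B ≤ b) :
    U p v k ((Equiv.swap ⟨B, hB⟩ b).trans π) (B + 1)
      = U p v k π B + v * p (π b) - k * (1 - lam p π B) := by
  rw [U_succ _ _ _ _ hB, U_swap_of_le_of_le p π _ b v k le_rfl hb,
    lam_swap_of_lt_iff p π _ b (by simp; omega)]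
  simp

end Strategy

theorem lt_budget_of_lt_budget_of_eq {p : P → ℝ} (hp : ∀ pw, 0 ≤ p pw) (hsum : ∑ pw, p pw = 1)
    {v k : ℝ} (hv : 0 ≤ v) (hk : 0 < k) {πs : Fin (Fintype.card P) ≃ P} {Bs : ℕ}
    (hopt : ∀ (π : Fin (Fintype.card P) ≃ P) (B : ℕ), B ≤ Fintype.card P →
      U p v k π B ≤ U p v k πs Bs)
    {pwi pwj : P} (heq : p pwi = p pwj) (hpos : 0 < p pwi)
    (hi : (πs.symm pwi : ℕ) < Bs) : (πs.symm pwj : ℕ) < Bs := by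
  by_contra! hj
  set r := πs.symm pwi
  set s := πs.symm pwj
  obtain ⟨B, rfl⟩ : ∃ B, Bs = B + 1 := ⟨Bs - 1, by omega⟩
  have hBs : B + 1 < Fintype.card P := lt_of_le_of_lt hj s.isLt
  have hB : B < Fintype.card P := by omega
  set c := p (πs ⟨B, hB⟩)
  have hc : 0 ≤ c := hp _
  have hstop : k * (1 - lam p πs B) ≤ v * c := by
    have h := hopt πs B hB.le
    rw [U_succ p πs v k hB] at h
    linarith
  have hnext : v * p pwi ≤ k * (1 - lam p πs B - c) := by
    have h := hopt ((Equiv.swap ⟨B + 1, hBs⟩ s).trans πs) (B + 1 + 1) hBs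
    rw [U_swap_succ p πs s v k hBs hj, πs.apply_symm_apply, lam_succ p πs hB, ← heq] at h
    linarith
  have hlast : c ≤ p pwi := by
    have hr : (r : ℕ) ≤ B := by omega
    have h := hopt ((Equiv.swap r ⟨B, hB⟩).trans πs) (B + 1) hBs.le
    rw [U_swap_of_le p πs r ⟨B, hB⟩ v k hr (Nat.lt_succ_self B), πs.apply_symm_apply] at h
    rcases hr.eq_or_lt with hrB | hrB
    · simp [c, ← hrB, r]
    · have hgap : (0 : ℝ) < (B - r : ℕ) := by exact_mod_cast Nat.sub_pos_of_lt hrB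
      nlinarith [mul_pos hk hgap]
  have hmass : lam p πs B + c + p pwi ≤ 1 := by
    simpa [s, heq, lam_succ p πs hB] using lam_add_le_one p πs hp hsum hj
  have hc0 : c = 0 := le_antisymm (by nlinarith [mul_le_mul_of_nonneg_left hlast hv]) hc
  rw [hc0] at hstop hmass
  nlinarith [mul_pos hk (show 0 < 1 - lam p πs B by linarith)]

theorem equivalence_class_atomic_signaling_general {Y : Type*} [Fintype Y]
    (q : P → Y → ℝ) (hq : ∀ pw y, 0 ≤ q pw y)
    (v k : ℝ) (hv : 0 ≤ v) (hk : 0 < k)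
    (y : Y) (hy : 0 < ∑ pw, q pw y)
    (πs : Fin (Fintype.card P) ≃ P) (Bs : ℕ)
    (hopt : ∀ (π : Fin (Fintype.card P) ≃ P) (B : ℕ), B ≤ Fintype.card P →
      U (post q y) v k π B ≤ U (post q y) v k πs Bs)
    (pwi pwj : P) (heq : post q y pwi = post q y pwj) (hpos : 0 < post q y pwi) :
    ((πs.symm pwi : ℕ) + 1 ≤ Bs ↔ (πs.symm pwj : ℕ) + 1 ≤ Bs) := by
  have hnonneg : ∀ pw, 0 ≤ post q y pw := fun pw => div_nonneg (hq pw y) hy.le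
  have hsum : ∑ pw, post q y pw = 1 := by
    simp only [post, ← Finset.sum_div, div_self hy.ne']
  simp only [Nat.add_one_le_iff]
  exact ⟨lt_budget_of_lt_budget_of_eq hnonneg hsum hv hk hopt heq hpos,
    lt_budget_of_lt_budget_of_eq hnonneg hsum hv hk hopt heq.symm (heq ▸ hpos)⟩

/-- Corollary (equivalence classes are checked atomically under signaling): let v ≥ 0,
k > 0, fix a signal y with Pr[y] > 0 and let (π*_y, B*_y) maximize the conditional
utility U_y. If p_y(pw_i) = p_y(pw_j) > 0 then
ind_{π*_y}(pw_i) ≤ B*_y ⟺ ind_{π*_y}(pw_j) ≤ B*_y. -/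
theorem equivalence_class_atomic_signaling {Y : Type*} [Fintype Y]
    (p : P → ℝ) (hp : ∀ pw, 0 ≤ p pw) (hsum : ∑ pw, p pw = 1)
    (q : P → Y → ℝ) (hq : ∀ pw y, 0 ≤ q pw y)
    (hqsum : ∑ pw, ∑ y, q pw y = 1)
    (hmarg : ∀ pw, p pw = ∑ y, q pw y)
    (v k : ℝ) (hv : 0 ≤ v) (hk : 0 < k)
    (y : Y) (hy : 0 < ∑ pw, q pw y)
    (πs : Fin (Fintype.card P) ≃ P) (Bs : ℕ) (hBs : Bs ≤ Fintype.card P)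
    (hopt : ∀ (π : Fin (Fintype.card P) ≃ P) (B : ℕ), B ≤ Fintype.card P →
      U (post q y) v k π B ≤ U (post q y) v k πs Bs)
    (pwi pwj : P) (heq : post q y pwi = post q y pwj) (hpos : 0 < post q y pwi) :
    ((πs.symm pwi : ℕ) + 1 ≤ Bs ↔ (πs.symm pwj : ℕ) + 1 ≤ Bs) :=
  equivalence_class_atomic_signaling_general q hq v k hv hk y hy πs Bs hopt pwi pwj heq hpos
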